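/- arXiv:2412.03962 — 2 statements merged into one kernel-verified Lean document; each statement's English description precedes it below -/
import Mathlib

section
/- Let p be a strictly positive, continuously differentiable probability density on ℝ^d with ∇ log p square-integrable against p, and let s : ℝ^d → ℝ^d be continuously differentiable with ‖s‖² integrable against p, each ∂_i s_i integrable against p, and each s_i ∂_i p integrable with ∫_{ℝ^d} ∂_i( s_i(x) p(x) ) dx = 0 for all i. Then E_{x∼p}[ (1/2)‖ s(x) − ∇_x log p(x) ‖² ] = E_{x∼p}[ Tr(∇_x s(x)) + (1/2)‖ s(x) ‖² ] + E_{x∼p}[ (1/2)‖ ∇_x log p(x) ‖² ], i.e., the explicit score-matching loss equals the implicit Hyvärinen objective up to an additive constant independent of s. -/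
open MeasureTheory Real Filter

/-- Partial derivative in the `i`-th coordinate direction. -/
noncomputable def pder {d : ℕ} (f : EuclideanSpace ℝ (Fin d) → ℝ) (i : Fin d)
    (z : EuclideanSpace ℝ (Fin d)) : ℝ :=
  fderiv ℝ f z (EuclideanSpace.single i 1)

/-- **Explicit score matching equals the implicit Hyvärinen objective up to a constant.**
For a strictly positive, continuously differentiable probability density `p` on `ℝ^d` with
square-integrable score `∇ log p`, and a continuously differentiable estimator `s` with
`‖s‖²` integrable against `p`, each `∂_i s_i` integrable against `p`, each `s_i ∂_i p`
Lebesgue integrable and `∫ ∂_i (s_i p) = 0`, we have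
`E_p[ ½‖s − ∇ log p‖² ] = E_p[ Tr(∇s) + ½‖s‖² ] + E_p[ ½‖∇ log p‖² ]`. -/
theorem explicit_eq_implicit_score_matching {d : ℕ}
    (p : EuclideanSpace ℝ (Fin d) → ℝ) (hp : ContDiff ℝ 1 p) (hppos : ∀ x, 0 < p x)
    (hprob : ∫ x, p x = 1)
    (hscore : Integrable (fun x => ‖gradient (fun y => Real.log (p y)) x‖ ^ 2 * p x))
    (s : EuclideanSpace ℝ (Fin d) → EuclideanSpace ℝ (Fin d)) (hs : ContDiff ℝ 1 s)
    (hs2 : Integrable (fun x => ‖s x‖ ^ 2 * p x))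
    (hdiv : ∀ i : Fin d, Integrable (fun x => pder (fun w => s w i) i x * p x))
    (hsp : ∀ i : Fin d, Integrable (fun x => s x i * pder p i x))
    (hstein : ∀ i : Fin d, ∫ x, pder (fun w => s w i * p w) i x = 0) :
    ∫ x, (1 / 2) * ‖s x - gradient (fun y => Real.log (p y)) x‖ ^ 2 * p x
      = (∫ x, ((∑ i, pder (fun w => s w i) i x) + (1 / 2) * ‖s x‖ ^ 2) * p x)
        + ∫ x, (1 / 2) * ‖gradient (fun y => Real.log (p y)) x‖ ^ 2 * p x := by
  set g := fun x => gradient (fun y => Real.log (p y)) x with hgdef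
  have hpdiff : ∀ x, DifferentiableAt ℝ p x := fun x => hp.differentiable one_ne_zero x
  have hsdiff : ∀ (i : Fin d) x, DifferentiableAt ℝ (fun w => s w i) x := by
    intro i x
    exact (EuclideanSpace.proj (𝕜 := ℝ) i).differentiableAt.comp x
      ((hs.differentiable one_ne_zero) x)
  -- derivative of log ∘ p
  have hlog : ∀ x, HasFDerivAt (fun y => Real.log (p y)) ((p x)⁻¹ • fderiv ℝ p x) x := by
    intro x
    exact (Real.hasDerivAt_log (hppos x).ne').comp_hasFDerivAt x (hpdiff x).hasFDerivAt
  -- component of the gradient of log p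
  have hgi : ∀ x i, g x i = (p x)⁻¹ * pder p i x := by
    intro x i
    have h1 : g x i = fderiv ℝ (fun y => Real.log (p y)) x (EuclideanSpace.single i 1) := by
      have : g x i = inner ℝ (g x) (EuclideanSpace.single i (1 : ℝ)) := by
        rw [EuclideanSpace.inner_single_right]; simp
      rw [this, hgdef]
      simp only [gradient]
      rw [InnerProductSpace.toDual_symm_apply]
    rw [h1, (hlog x).fderiv]
    simp [pder]
  -- product rule for each coordinate
  have hprod : ∀ (i : Fin d) x, pder (fun w => s w i * p w) i x
      = s x i * pder p i x + pder (fun w => s w i) i x * p x := by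
    intro i x
    have h : HasFDerivAt (fun w => s w i * p w) (s x i • fderiv ℝ p x + p x • fderiv ℝ (fun w => s w i) x) x :=
      ((hsdiff i x).hasFDerivAt.mul (hpdiff x).hasFDerivAt)
    rw [pder, h.fderiv]
    simp [pder]
    ring
  -- integration by parts identity
  have hibp : ∀ i : Fin d, ∫ x, s x i * pder p i x
      = - ∫ x, pder (fun w => s w i) i x * p x := by
    intro i
    have h0 := hstein i
    have h1 : ∫ x, pder (fun w => s w i * p w) i x
        = (∫ x, s x i * pder p i x) + ∫ x, pder (fun w => s w i) i x * p x := by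
      simp_rw [hprod i]
      exact integral_add (hsp i) (hdiv i)
    rw [h0] at h1
    linarith
  -- pointwise expansion of the LHS integrand
  have hpt : ∀ x, (1 / 2) * ‖s x - g x‖ ^ 2 * p x
      = ((1 / 2) * ‖s x‖ ^ 2 * p x + (1 / 2) * ‖g x‖ ^ 2 * p x)
        - ∑ i, s x i * pder p i x := by
    intro x
    have hinner : (inner ℝ (s x) (g x) : ℝ) * p x = ∑ i, s x i * pder p i x := by
      rw [PiLp.inner_apply, Finset.sum_mul]
      refine Finset.sum_congr rfl fun i _ => ?_
      rw [RCLike.inner_apply, starRingEnd_apply, star_trivial, hgi x i]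
      field_simp [(hppos x).ne']
    have hns := norm_sub_sq_real (s x) (g x)
    linear_combination (p x / 2) * hns - hinner
  -- integrability pieces
  have hA : Integrable (fun x => (1 / 2) * ‖s x‖ ^ 2 * p x) := by
    simpa [mul_assoc] using hs2.const_mul (1 / 2)
  have hB : Integrable (fun x => (1 / 2) * ‖g x‖ ^ 2 * p x) := by
    simpa [mul_assoc, hgdef] using hscore.const_mul (1 / 2)
  have hC : Integrable (fun x => ∑ i, s x i * pder p i x) :=
    integrable_finset_sum _ fun i _ => hsp i
  have hD : Integrable (fun x => (∑ i, pder (fun w => s w i) i x) * p x) := by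
    have : (fun x => (∑ i, pder (fun w => s w i) i x) * p x)
        = fun x => ∑ i, pder (fun w => s w i) i x * p x := by
      funext x; rw [Finset.sum_mul]
    rw [this]
    exact integrable_finset_sum _ fun i _ => hdiv i
  -- compute LHS
  have hLHS : ∫ x, (1 / 2) * ‖s x - g x‖ ^ 2 * p x
      = ((∫ x, (1 / 2) * ‖s x‖ ^ 2 * p x) + ∫ x, (1 / 2) * ‖g x‖ ^ 2 * p x)
        - ∑ i, ∫ x, s x i * pder p i x := by
    have hAB : Integrable (fun x => (1 / 2) * ‖s x‖ ^ 2 * p x + (1 / 2) * ‖g x‖ ^ 2 * p x) :=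
      hA.add hB
    simp_rw [hpt]
    rw [integral_sub hAB hC, integral_add hA hB,
      integral_finset_sum _ fun i _ => hsp i]
  -- compute first integral on RHS
  have hRHS1 : ∫ x, ((∑ i, pder (fun w => s w i) i x) + (1 / 2) * ‖s x‖ ^ 2) * p x
      = (∑ i, ∫ x, pder (fun w => s w i) i x * p x)
        + ∫ x, (1 / 2) * ‖s x‖ ^ 2 * p x := by
    have hrw : (fun x => ((∑ i, pder (fun w => s w i) i x) + (1 / 2) * ‖s x‖ ^ 2) * p x)
        = fun x => (∑ i, pder (fun w => s w i) i x) * p x + (1 / 2) * ‖s x‖ ^ 2 * p x := by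
      funext x; ring
    rw [hrw, integral_add hD hA]
    congr 1
    have : (fun x => (∑ i, pder (fun w => s w i) i x) * p x)
        = fun x => ∑ i, pder (fun w => s w i) i x * p x := by
      funext x; rw [Finset.sum_mul]
    rw [this, integral_finset_sum _ fun i _ => hdiv i]
  rw [hLHS, hRHS1]
  have : ∑ i, ∫ x, s x i * pder p i x
      = - ∑ i, ∫ x, pder (fun w => s w i) i x * p x := by
    rw [← Finset.sum_neg_distrib]
    exact Finset.sum_congr rfl fun i _ => hibp i
  rw [this]
  ring
end

section
/- Let p be a probability density on ℝ^d and for σ > 0 let q_σ(x̃|x) = N(x̃; x, σ² I_d) be the Gaussian perturbation kernel, with marginal q_σ(x̃) = ∫_{ℝ^d} q_σ(x̃|x) p(x) dx. Let s : ℝ^d → ℝ^d be measurable with ‖s‖² integrable against q_σ, and assume ∇ log q_σ is square-integrable against q_σ and ∇_{x̃} log q_σ(x̃|x) = (x − x̃)/σ² is square-integrable against p(x) q_σ(x̃|x). Then E_{x̃∼q_σ}[ (1/2)‖ s(x̃) − ∇_{x̃} log q_σ(x̃) ‖² ] = E_{x∼p} E_{x̃∼q_σ(·|x)}[ (1/2)‖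 s(x̃) − ∇_{x̃} log q_σ(x̃|x) ‖² ] + C, where C is a constant that does not depend on s. In particular, minimizing the denoising score matching objective over s is equivalent to minimizing the explicit score-matching objective for the perturbed density q_σ. -/
open MeasureTheory Real Filter
open scoped RealInnerProductSpace

noncomputable def gaussPdf {d : ℕ} (μ : EuclideanSpace ℝ (Fin d)) (σ : ℝ)
    (z : EuclideanSpace ℝ (Fin d)) : ℝ :=
  (2 * π * σ ^ 2) ^ (-(d : ℝ) / 2) * Real.exp (-‖z - μ‖ ^ 2 / (2 * σ ^ 2))

namespace DSM

variable {d : ℕ} {σ : ℝ}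

local notation "E" => EuclideanSpace ℝ (Fin d)

lemma exp_term_le_one (hσ : 0 < σ) {a : ℝ} (ha : 0 ≤ a) :
    Real.exp (-a / (2 * σ ^ 2)) ≤ 1 := by
  rw [Real.exp_le_one_iff]
  have h2 : (0:ℝ) < 2 * σ ^ 2 := by positivity
  exact div_nonpos_of_nonpos_of_nonneg (neg_nonpos.mpr ha) h2.le

lemma base_pos (hσ : 0 < σ) : (0:ℝ) < (2 * π * σ ^ 2) ^ (-(d : ℝ) / 2) :=
  Real.rpow_pos_of_pos (by positivity) _

lemma gaussPdf_pos (hσ : 0 < σ) (x z : E) : 0 < gaussPdf x σ z :=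
  mul_pos (base_pos hσ) (Real.exp_pos _)

lemma gaussPdf_le (hσ : 0 < σ) (x z : E) :
    gaussPdf x σ z ≤ (2 * π * σ ^ 2) ^ (-(d : ℝ) / 2) := by
  calc gaussPdf x σ z ≤ (2 * π * σ ^ 2) ^ (-(d : ℝ) / 2) * 1 :=
        mul_le_mul_of_nonneg_left (exp_term_le_one hσ (by positivity)) (base_pos hσ).le
    _ = _ := mul_one _

lemma gaussPdf_continuous (hσ : 0 < σ) :
    Continuous (fun p : E × E => gaussPdf p.1 σ p.2) := by
  unfold gaussPdf
  fun_prop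

lemma hasGradientAt_gaussPdf (hσ : 0 < σ) (x y : E) :
    HasGradientAt (fun z => gaussPdf x σ z)
      (gaussPdf x σ y • ((σ ^ 2)⁻¹ • (x - y))) y := by
  have hσ2 : (σ:ℝ) ^ 2 ≠ 0 := by positivity
  have h1 : HasFDerivAt (fun z : E => ‖z - x‖ ^ 2)
      (2 • (innerSL ℝ (y - x)).comp (ContinuousLinearMap.id ℝ E)) y := by
    have := ((hasFDerivAt_id y).sub_const x).norm_sq
    simpa using this
  have h2 : HasFDerivAt (fun z : E => -‖z - x‖ ^ 2 / (2 * σ ^ 2))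
      ((-(2 * σ ^ 2)⁻¹) • (2 • (innerSL ℝ (y - x)).comp (ContinuousLinearMap.id ℝ E))) y := by
    have heq : (fun z : E => -‖z - x‖ ^ 2 / (2 * σ ^ 2))
        = fun z : E => (-(2 * σ ^ 2)⁻¹) * ‖z - x‖ ^ 2 := by
      funext z; field_simp
    rw [heq]
    exact h1.const_mul _
  have h3 := (Real.hasDerivAt_exp (-‖y - x‖ ^ 2 / (2 * σ ^ 2))).comp_hasFDerivAt y h2
  have h4 := h3.const_mul ((2 * π * σ ^ 2) ^ (-(d : ℝ) / 2))
  rw [hasGradientAt_iff_hasFDerivAt]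
  convert h4 using 1
  · rfl
  · rfl
  ext h
  simp only [gaussPdf, InnerProductSpace.toDual_apply_apply, ContinuousLinearMap.smul_apply,
    ContinuousLinearMap.coe_smul', Pi.smul_apply, ContinuousLinearMap.coe_comp',
    Function.comp_apply, ContinuousLinearMap.coe_id', id_eq,
    innerSL_apply_apply, real_inner_smul_left, smul_eq_mul]
  have hxy : ⟪x - y, h⟫ = -⟪y - x, h⟫ := by
    rw [← inner_neg_left]; congr 1; abel
  rw [hxy]
  field_simp
  ring

lemma t_exp_le (hσ : 0 < σ) (t : ℝ) (ht : 0 ≤ t) :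
    t * Real.exp (-t ^ 2 / (2 * σ ^ 2)) ≤ 2 * σ := by
  rcases le_or_gt t (2 * σ) with h | h
  · calc t * Real.exp (-t ^ 2 / (2 * σ ^ 2)) ≤ t * 1 :=
        mul_le_mul_of_nonneg_left (exp_term_le_one hσ (by positivity)) ht
      _ ≤ 2 * σ := by rw [mul_one]; exact h
  · have ht0 : 0 < t := lt_trans (by positivity) h
    set u : ℝ := t ^ 2 / (2 * σ ^ 2) with hu_def
    have hu0 : 0 < u := by positivity
    have hu : u ≤ Real.exp u := by
      have := Real.add_one_le_exp u; linarith
    have hexp : Real.exp (-t ^ 2 / (2 * σ ^ 2)) ≤ u⁻¹ := by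
      rw [neg_div, Real.exp_neg]
      exact inv_anti₀ hu0 hu
    have huinv : u⁻¹ = 2 * σ ^ 2 / t ^ 2 := by
      rw [hu_def]; field_simp
    calc t * Real.exp (-t ^ 2 / (2 * σ ^ 2)) ≤ t * (2 * σ ^ 2 / t ^ 2) := by
          rw [← huinv]; exact mul_le_mul_of_nonneg_left hexp ht
      _ = 2 * σ ^ 2 / t := by field_simp
      _ ≤ 2 * σ := by
          rw [div_le_iff₀ ht0]
          nlinarith

lemma gaussPdf_grad_norm_le (hσ : 0 < σ) (x y : E) :
    gaussPdf x σ y * ‖(σ ^ 2)⁻¹ • (x - y)‖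
      ≤ (2 * π * σ ^ 2) ^ (-(d : ℝ) / 2) * (2 / σ) := by
  have hσ2 : (0:ℝ) < σ ^ 2 := by positivity
  rw [norm_smul]
  have h1 : ‖(σ ^ 2)⁻¹‖ = (σ ^ 2)⁻¹ := by
    rw [Real.norm_eq_abs, abs_of_pos (by positivity)]
  rw [h1, gaussPdf]
  have hnorm : ‖x - y‖ = ‖y - x‖ := by rw [← neg_sub, norm_neg]
  rw [hnorm]
  set B := (2 * π * σ ^ 2) ^ (-(d : ℝ) / 2) with hB
  have hB0 : 0 < B := base_pos hσ
  set t := ‖y - x‖ with htdef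
  have ht : 0 ≤ t := norm_nonneg _
  have key : t * Real.exp (-t ^ 2 / (2 * σ ^ 2)) ≤ 2 * σ := t_exp_le hσ t ht
  calc B * Real.exp (-t ^ 2 / (2 * σ ^ 2)) * ((σ ^ 2)⁻¹ * t)
      = B * (σ ^ 2)⁻¹ * (t * Real.exp (-t ^ 2 / (2 * σ ^ 2))) := by ring
    _ ≤ B * (σ ^ 2)⁻¹ * (2 * σ) := by
        apply mul_le_mul_of_nonneg_left key (by positivity)
    _ = B * (2 / σ) := by field_simp

variable {d : ℕ}

section Main

variable (p : EuclideanSpace ℝ (Fin d) → ℝ) (σ : ℝ)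

-- helper: continuity in x / in y
lemma gaussPdf_cont_left (hσ : 0 < σ) (y : E) : Continuous fun x : E => gaussPdf x σ y := by
  unfold gaussPdf; fun_prop

lemma gaussPdf_cont_right (hσ : 0 < σ) (x : E) : Continuous fun y : E => gaussPdf x σ y := by
  unfold gaussPdf; fun_prop

end Main

end DSM

set_option maxHeartbeats 2000000 in
open DSM in
/-- **Denoising score matching (Vincent's identity).** Let `p` be a probability density on
`ℝ^d`, `q_σ(x̃|x)` the Gaussian perturbation kernel with marginal
`q_σ(x̃) = ∫ q_σ(x̃|x) p(x) dx`. Assume `∇ log q_σ` is square-integrable against `q_σ` and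
the conditional score `(x − x̃)/σ²` is square-integrable against `p(x) q_σ(x̃|x)`. Then
there is a constant `C`, independent of `s`, such that for every measurable `s` with `‖s‖²`
integrable against `q_σ`, the explicit score-matching objective for `q_σ` equals the
denoising score matching objective plus `C`. -/
theorem denoising_score_matching {d : ℕ}
    (p : EuclideanSpace ℝ (Fin d) → ℝ) (hpm : Measurable p) (hp0 : ∀ x, 0 ≤ p x)
    (hprob : ∫ x, p x = 1) (σ : ℝ) (hσ : 0 < σ)
    (hglogq : Integrable (fun y =>
      ‖gradient (fun w => Real.log (∫ x, p x * gaussPdf x σ w)) y‖ ^ 2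
        * ∫ x, p x * gaussPdf x σ y))
    (hcond : Integrable (fun xy : EuclideanSpace ℝ (Fin d) × EuclideanSpace ℝ (Fin d) =>
      ‖(σ ^ 2)⁻¹ • (xy.1 - xy.2)‖ ^ 2 * (p xy.1 * gaussPdf xy.1 σ xy.2))) :
    ∃ C : ℝ, ∀ s : EuclideanSpace ℝ (Fin d) → EuclideanSpace ℝ (Fin d),
      Measurable s →
      Integrable (fun y => ‖s y‖ ^ 2 * ∫ x, p x * gaussPdf x σ y) →
      ∫ y, (1 / 2) * ‖s y - gradient (fun w => Real.log (∫ x, p x * gaussPdf x σ w)) y‖ ^ 2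
          * ∫ x, p x * gaussPdf x σ y
        = (∫ x, p x * ∫ y, (1 / 2) * ‖s y - (σ ^ 2)⁻¹ • (x - y)‖ ^ 2 * gaussPdf x σ y)
          + C := by
  classical
  let E := EuclideanSpace ℝ (Fin d)
  let q : E → ℝ := fun y => ∫ x, p x * gaussPdf x σ y
  let c : E → E → E := fun x y => (σ ^ 2)⁻¹ • (x - y)
  let g : E → E := fun y => gradient (fun w => Real.log (∫ x, p x * gaussPdf x σ w)) y
  let v : E → E := fun y => ∫ x, (p x * gaussPdf x σ y) • c x y
  set B : ℝ := (2 * π * σ ^ 2) ^ (-(d : ℝ) / 2) with hBdef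
  have hB0 : 0 < B := base_pos hσ
  have hσ2 : (0:ℝ) < σ ^ 2 := by positivity
  -- p is integrable
  have hpint : Integrable p := by
    by_contra h
    rw [integral_undef h] at hprob
    exact one_ne_zero hprob.symm
  -- integrability of the conditional density against p
  have hKint : ∀ y : E, Integrable (fun x => p x * gaussPdf x σ y) := by
    intro y
    refine Integrable.mono' (hpint.mul_const B)
      ((hpm.mul (gaussPdf_cont_left σ hσ y).measurable).aestronglyMeasurable)
      (Filter.Eventually.of_forall fun x => ?_)
    rw [Real.norm_eq_abs, abs_of_nonneg (mul_nonneg (hp0 x) (gaussPdf_pos hσ x y).le)]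
    exact mul_le_mul_of_nonneg_left (gaussPdf_le hσ x y) (hp0 x)
  have hq_nonneg : ∀ y, 0 ≤ q y := fun y =>
    integral_nonneg fun x => mul_nonneg (hp0 x) (gaussPdf_pos hσ x y).le
  have hq_pos : ∀ y, 0 < q y := by
    intro y
    rcases (hq_nonneg y).lt_or_eq with h | h
    · exact h
    exfalso
    have hae : (fun x => p x * gaussPdf x σ y) =ᵐ[volume] 0 :=
      (integral_eq_zero_iff_of_nonneg_ae
        (Filter.Eventually.of_forall fun x => mul_nonneg (hp0 x) (gaussPdf_pos hσ x y).le)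
        (hKint y)).mp h.symm
    have hp_ae : p =ᵐ[volume] 0 := by
      filter_upwards [hae] with x hx
      rcases mul_eq_zero.mp hx with h1 | h2
      · exact h1
      · exact absurd h2 (gaussPdf_pos hσ x y).ne'
    rw [integral_congr_ae hp_ae] at hprob
    simp at hprob
  -- integrability of the vector field integrand
  have hc_cont : Continuous fun z : E × E => c z.1 z.2 := by
    simp only [c]
    fun_prop
  have hv_int : ∀ y : E, Integrable (fun x => (p x * gaussPdf x σ y) • c x y) := by
    intro y
    refine Integrable.mono' (hpint.mul_const (B * (2 / σ)))
      (((hpm.mul (gaussPdf_cont_left σ hσ y).measurable).aestronglyMeasurable).smul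
        ((hc_cont.comp (continuous_id.prodMk continuous_const)).aestronglyMeasurable))
      (Filter.Eventually.of_forall fun x => ?_)
    rw [norm_smul, Real.norm_eq_abs, abs_of_nonneg (mul_nonneg (hp0 x) (gaussPdf_pos hσ x y).le),
      mul_assoc]
    exact mul_le_mul_of_nonneg_left (gaussPdf_grad_norm_le hσ x y) (hp0 x)
  -- differentiation under the integral sign
  have hbnd : ∀ (x y : E), ‖p x • (InnerProductSpace.toDual ℝ E (gaussPdf x σ y • c x y))‖
      ≤ p x * (B * (2 / σ)) := by
    intro x y
    rw [norm_smul, Real.norm_eq_abs, abs_of_nonneg (hp0 x), LinearIsometryEquiv.norm_map,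
      norm_smul, Real.norm_eq_abs, abs_of_nonneg (gaussPdf_pos hσ x y).le]
    exact mul_le_mul_of_nonneg_left (gaussPdf_grad_norm_le hσ x y) (hp0 x)
  have hF'meas : ∀ y : E, AEStronglyMeasurable
      (fun x => p x • (InnerProductSpace.toDual ℝ E (gaussPdf x σ y • c x y)))
      (volume : Measure E) := by
    intro y
    exact (hpm.aestronglyMeasurable).smul
      (((InnerProductSpace.toDual ℝ E).continuous.comp
        ((gaussPdf_cont_left σ hσ y).smul
          (hc_cont.comp (continuous_id.prodMk continuous_const)))).aestronglyMeasurable)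
  have hF'int : ∀ y : E, Integrable
      (fun x => p x • (InnerProductSpace.toDual ℝ E (gaussPdf x σ y • c x y))) := by
    intro y
    exact Integrable.mono' (hpint.mul_const (B * (2 / σ))) (hF'meas y)
      (Filter.Eventually.of_forall fun x => hbnd x y)
  have hqgrad : ∀ y₀ : E, HasGradientAt q (v y₀) y₀ := by
    intro y₀
    have main : HasFDerivAt (fun y : E => ∫ x, p x * gaussPdf x σ y)
        (∫ x, p x • (InnerProductSpace.toDual ℝ E (gaussPdf x σ y₀ • c x y₀))) y₀ := by
      apply hasFDerivAt_integral_of_dominated_of_fderiv_le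
        (F' := fun y x => p x • (InnerProductSpace.toDual ℝ E (gaussPdf x σ y • c x y)))
        (bound := fun x => p x * (B * (2 / σ))) Filter.univ_mem
      · exact Filter.Eventually.of_forall fun y =>
          (hpm.mul (gaussPdf_cont_left σ hσ y).measurable).aestronglyMeasurable
      · exact hKint y₀
      · exact hF'meas y₀
      · exact Filter.Eventually.of_forall fun x y _ => hbnd x y
      · exact hpint.mul_const _
      · exact Filter.Eventually.of_forall fun x y _ =>
          ((hasGradientAt_gaussPdf hσ x y).hasFDerivAt).const_mul (p x)
    have heqCLM : (∫ x, p x • (InnerProductSpace.toDual ℝ E (gaussPdf x σ y₀ • c x y₀)))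
        = InnerProductSpace.toDual ℝ E (v y₀) := by
      apply ContinuousLinearMap.ext
      intro h
      rw [ContinuousLinearMap.integral_apply (hF'int y₀)]
      simp only [ContinuousLinearMap.smul_apply, InnerProductSpace.toDual_apply_apply, smul_eq_mul]
      have hpt : ∀ x, p x * ⟪gaussPdf x σ y₀ • c x y₀, h⟫
          = ⟪h, (p x * gaussPdf x σ y₀) • c x y₀⟫ := by
        intro x
        rw [real_inner_smul_left, real_inner_smul_right, real_inner_comm]
        ring
      simp_rw [hpt]
      rw [integral_inner (hv_int y₀) h]
      exact real_inner_comm _ _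
    rw [hasGradientAt_iff_hasFDerivAt, ← heqCLM]
    exact main
  -- gradient of log q
  have hg : ∀ y, g y = (q y)⁻¹ • v y := by
    intro y
    have h1 := (Real.hasDerivAt_log (hq_pos y).ne').comp_hasFDerivAt y (hqgrad y).hasFDerivAt
    have h2 : HasGradientAt (fun w => Real.log (q w)) ((q y)⁻¹ • v y) y := by
      rw [hasGradientAt_iff_hasFDerivAt, _root_.map_smul]
      exact h1
    exact h2.gradient
  have hqv : ∀ y, q y • g y = v y := by
    intro y
    rw [hg y, smul_smul, mul_inv_cancel₀ (hq_pos y).ne', one_smul]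
  have hq_diff : Differentiable ℝ q := fun y => ((hqgrad y).hasFDerivAt).differentiableAt
  have hq_cont : Continuous q := hq_diff.continuous
  have hg_meas : Measurable g :=
    ((InnerProductSpace.toDual ℝ E).symm.continuous.measurable).comp
      (measurable_fderiv ℝ (fun w => Real.log (∫ x, p x * gaussPdf x σ w)))
  have hglogq' : Integrable (fun y => ‖g y‖ ^ 2 * q y) := hglogq
  have hcond' : Integrable
      (fun z : E × E => ‖c z.1 z.2‖ ^ 2 * (p z.1 * gaussPdf z.1 σ z.2)) := hcond
  -- choose the constant
  refine ⟨(1/2) * (∫ y, ‖g y‖ ^ 2 * q y)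
      - (1/2) * ∫ z : E × E, ‖c z.1 z.2‖ ^ 2 * (p z.1 * gaussPdf z.1 σ z.2), ?_⟩
  intro s hs hsi
  have hsi' : Integrable (fun y => ‖s y‖ ^ 2 * q y) := hsi
  have hpK_nonneg : ∀ z : E × E, 0 ≤ p z.1 * gaussPdf z.1 σ z.2 :=
    fun z => mul_nonneg (hp0 z.1) (gaussPdf_pos hσ z.1 z.2).le
  have hpKprod_meas : Measurable (fun z : E × E => p z.1 * gaussPdf z.1 σ z.2) :=
    (hpm.comp measurable_fst).mul (gaussPdf_continuous hσ).measurable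
  -- ‖s‖² against the joint density, product integrability
  have hs2prod : Integrable (fun z : E × E => ‖s z.2‖ ^ 2 * (p z.1 * gaussPdf z.1 σ z.2)) := by
    rw [Measure.volume_eq_prod]
    refine (integrable_prod_iff'
      ((((hs.comp measurable_snd).norm.pow_const 2).mul hpKprod_meas).aestronglyMeasurable)).mpr
      ⟨Filter.Eventually.of_forall fun y => ?_, ?_⟩
    · simpa using (hKint y).const_mul (‖s y‖ ^ 2)
    · refine Integrable.congr hsi' (Filter.Eventually.of_forall fun y => ?_)
      simp only [Function.comp_apply]
      show ‖s y‖ ^ 2 * q y = ∫ x, ‖(‖s y‖ ^ 2 * (p x * gaussPdf x σ y))‖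
      rw [← integral_const_mul]
      congr 1
      funext x
      rw [Real.norm_eq_abs, abs_of_nonneg (mul_nonneg (by positivity) (hpK_nonneg (x, y)))]
  -- cross term, product integrability
  have hXprod : Integrable (fun z : E × E =>
      ⟪s z.2, c z.1 z.2⟫ * (p z.1 * gaussPdf z.1 σ z.2)) := by
    refine Integrable.mono' (hs2prod.add hcond')
      ((((hs.comp measurable_snd).inner hc_cont.measurable).mul
        hpKprod_meas).aestronglyMeasurable)
      (Filter.Eventually.of_forall fun z => ?_)
    rw [Real.norm_eq_abs, abs_mul, abs_of_nonneg (hpK_nonneg z)]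
    have h1 := abs_real_inner_le_norm (s z.2) (c z.1 z.2)
    have h2 : ‖s z.2‖ * ‖c z.1 z.2‖ ≤ ‖s z.2‖ ^ 2 + ‖c z.1 z.2‖ ^ 2 := by
      nlinarith [sq_nonneg (‖s z.2‖ - ‖c z.1 z.2‖), norm_nonneg (s z.2), norm_nonneg (c z.1 z.2)]
    calc |⟪s z.2, c z.1 z.2⟫| * (p z.1 * gaussPdf z.1 σ z.2)
        ≤ (‖s z.2‖ ^ 2 + ‖c z.1 z.2‖ ^ 2) * (p z.1 * gaussPdf z.1 σ z.2) :=
          mul_le_mul_of_nonneg_right (h1.trans h2) (hpK_nonneg z)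
      _ = ‖s z.2‖ ^ 2 * (p z.1 * gaussPdf z.1 σ z.2)
          + ‖c z.1 z.2‖ ^ 2 * (p z.1 * gaussPdf z.1 σ z.2) := by ring
  -- expansion of the square, on the product space
  have heqD : (fun z : E × E =>
        (1 / 2 : ℝ) * ‖s z.2 - c z.1 z.2‖ ^ 2 * (p z.1 * gaussPdf z.1 σ z.2))
      = fun z => (1 / 2) * (‖s z.2‖ ^ 2 * (p z.1 * gaussPdf z.1 σ z.2))
          - ⟪s z.2, c z.1 z.2⟫ * (p z.1 * gaussPdf z.1 σ z.2)
          + (1 / 2) * (‖c z.1 z.2‖ ^ 2 * (p z.1 * gaussPdf z.1 σ z.2)) := by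
    funext z
    rw [norm_sub_sq_real]
    ring
  have hdiffprod : Integrable (fun z : E × E =>
      (1 / 2 : ℝ) * ‖s z.2 - c z.1 z.2‖ ^ 2 * (p z.1 * gaussPdf z.1 σ z.2)) := by
    rw [heqD]
    exact ((hs2prod.const_mul _).sub hXprod).add (hcond'.const_mul _)
  -- integrability of the cross term on the y-side
  have hsg : Integrable (fun y => ⟪s y, g y⟫ * q y) := by
    refine Integrable.mono' (hsi'.add hglogq')
      (((hs.inner hg_meas).mul hq_cont.measurable).aestronglyMeasurable)
      (Filter.Eventually.of_forall fun y => ?_)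
    rw [Real.norm_eq_abs, abs_mul, abs_of_nonneg (hq_nonneg y)]
    have h1 := abs_real_inner_le_norm (s y) (g y)
    have h2 : ‖s y‖ * ‖g y‖ ≤ ‖s y‖ ^ 2 + ‖g y‖ ^ 2 := by
      nlinarith [sq_nonneg (‖s y‖ - ‖g y‖), norm_nonneg (s y), norm_nonneg (g y)]
    calc |⟪s y, g y⟫| * q y ≤ (‖s y‖ ^ 2 + ‖g y‖ ^ 2) * q y :=
        mul_le_mul_of_nonneg_right (h1.trans h2) (hq_nonneg y)
      _ = ‖s y‖ ^ 2 * q y + ‖g y‖ ^ 2 * q y := by ring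
  -- split the left-hand side
  have hL : ∫ y, (1 / 2 : ℝ) * ‖s y - g y‖ ^ 2 * q y
      = (1 / 2) * (∫ y, ‖s y‖ ^ 2 * q y) - (∫ y, ⟪s y, g y⟫ * q y)
        + (1 / 2) * (∫ y, ‖g y‖ ^ 2 * q y) := by
    have heqL : (fun y => (1 / 2 : ℝ) * ‖s y - g y‖ ^ 2 * q y)
        = fun y => (1 / 2) * (‖s y‖ ^ 2 * q y) - ⟪s y, g y⟫ * q y
            + (1 / 2) * (‖g y‖ ^ 2 * q y) := by
      funext y
      rw [norm_sub_sq_real]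
      ring
    have h1 : Integrable (fun y => (1 / 2 : ℝ) * (‖s y‖ ^ 2 * q y)) := hsi'.const_mul _
    have h3 : Integrable (fun y => (1 / 2 : ℝ) * (‖g y‖ ^ 2 * q y)) := hglogq'.const_mul _
    have hsub : Integrable (fun y => (1 / 2 : ℝ) * (‖s y‖ ^ 2 * q y) - ⟪s y, g y⟫ * q y) :=
      h1.sub hsg
    rw [heqL, integral_add hsub h3, integral_sub h1 hsg, integral_const_mul, integral_const_mul]
  -- the cross terms agree (Vincent's key identity)
  have hptcross : ∀ y, ⟪s y, g y⟫ * q y = ∫ x, ⟪s y, c x y⟫ * (p x * gaussPdf x σ y) := by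
    intro y
    have h1 : ⟪s y, g y⟫ * q y = ⟪s y, v y⟫ := by
      rw [← hqv y, real_inner_smul_right]
      ring
    rw [h1, show ⟪s y, v y⟫ = ∫ x, ⟪s y, (p x * gaussPdf x σ y) • c x y⟫ from
      (integral_inner (hv_int y) (s y)).symm]
    congr 1
    funext x
    rw [real_inner_smul_right]
    ring
  have hX' : Integrable (Function.uncurry fun x y : E =>
      ⟪s y, c x y⟫ * (p x * gaussPdf x σ y)) ((volume : Measure E).prod volume) := by
    rw [← Measure.volume_eq_prod]
    exact hXprod
  have hcross : (∫ y, ⟪s y, g y⟫ * q y)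
      = ∫ z : E × E, ⟪s z.2, c z.1 z.2⟫ * (p z.1 * gaussPdf z.1 σ z.2) := by
    simp_rw [hptcross]
    rw [Measure.volume_eq_prod (E) (E), ← MeasureTheory.integral_integral_swap hX',
      MeasureTheory.integral_integral hX']
  -- the ‖s‖² terms agree
  have hs2prod' : Integrable (fun z : E × E => ‖s z.2‖ ^ 2 * (p z.1 * gaussPdf z.1 σ z.2))
      ((volume : Measure E).prod volume) := by
    rw [← Measure.volume_eq_prod]
    exact hs2prod
  have hA : (∫ z : E × E, ‖s z.2‖ ^ 2 * (p z.1 * gaussPdf z.1 σ z.2))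
      = ∫ y, ‖s y‖ ^ 2 * q y := by
    rw [Measure.volume_eq_prod (E) (E), MeasureTheory.integral_prod_symm _ hs2prod']
    congr 1
    funext y
    show ∫ x, ‖s y‖ ^ 2 * (p x * gaussPdf x σ y) = ‖s y‖ ^ 2 * q y
    exact integral_const_mul _ _
  -- rewrite the right-hand side as a product integral
  have hD' : Integrable (Function.uncurry fun x y : E =>
      (1 / 2 : ℝ) * ‖s y - c x y‖ ^ 2 * (p x * gaussPdf x σ y))
      ((volume : Measure E).prod volume) := by
    rw [← Measure.volume_eq_prod]
    exact hdiffprod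
  have hRHS : (∫ x, p x * ∫ y, (1 / 2 : ℝ) * ‖s y - c x y‖ ^ 2 * gaussPdf x σ y)
      = ∫ z : E × E, (1 / 2 : ℝ) * ‖s z.2 - c z.1 z.2‖ ^ 2 * (p z.1 * gaussPdf z.1 σ z.2) := by
    have hpt : ∀ x, p x * ∫ y, (1 / 2 : ℝ) * ‖s y - c x y‖ ^ 2 * gaussPdf x σ y
        = ∫ y, (1 / 2 : ℝ) * ‖s y - c x y‖ ^ 2 * (p x * gaussPdf x σ y) := by
      intro x
      rw [← integral_const_mul]
      congr 1
      funext y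
      ring
    simp_rw [hpt]
    rw [Measure.volume_eq_prod (E) (E), MeasureTheory.integral_integral hD']
  -- split the product integral
  have hPS : (∫ z : E × E, (1 / 2 : ℝ) * ‖s z.2 - c z.1 z.2‖ ^ 2 * (p z.1 * gaussPdf z.1 σ z.2))
      = (1 / 2) * (∫ z : E × E, ‖s z.2‖ ^ 2 * (p z.1 * gaussPdf z.1 σ z.2))
        - (∫ z : E × E, ⟪s z.2, c z.1 z.2⟫ * (p z.1 * gaussPdf z.1 σ z.2))
        + (1 / 2) * (∫ z : E × E, ‖c z.1 z.2‖ ^ 2 * (p z.1 * gaussPdf z.1 σ z.2)) := by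
    have h1 : Integrable (fun z : E × E =>
        (1 / 2 : ℝ) * (‖s z.2‖ ^ 2 * (p z.1 * gaussPdf z.1 σ z.2))) := hs2prod.const_mul _
    have h3 : Integrable (fun z : E × E =>
        (1 / 2 : ℝ) * (‖c z.1 z.2‖ ^ 2 * (p z.1 * gaussPdf z.1 σ z.2))) := hcond'.const_mul _
    have hsub : Integrable (fun z : E × E =>
        (1 / 2 : ℝ) * (‖s z.2‖ ^ 2 * (p z.1 * gaussPdf z.1 σ z.2))
          - ⟪s z.2, c z.1 z.2⟫ * (p z.1 * gaussPdf z.1 σ z.2)) := h1.sub hXprod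
    rw [heqD, integral_add hsub h3, integral_sub h1 hXprod, integral_const_mul, integral_const_mul]
  -- put everything together
  show ∫ y, (1 / 2 : ℝ) * ‖s y - g y‖ ^ 2 * q y
      = (∫ x, p x * ∫ y, (1 / 2 : ℝ) * ‖s y - c x y‖ ^ 2 * gaussPdf x σ y)
        + ((1 / 2) * (∫ y, ‖g y‖ ^ 2 * q y)
          - (1 / 2) * ∫ z : E × E, ‖c z.1 z.2‖ ^ 2 * (p z.1 * gaussPdf z.1 σ z.2))
  rw [hL, hRHS, hPS, hA, ← hcross]
  ring
end
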